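/- Fix a ∈ (0,1] and a sequence α_1, α_2, ... with α_n ∈ [a,1] for all n. Let the nested designs X_n be generated by the relaxed greedy-packing algorithm: x_1 ∈ X is arbitrary and for each n ≥ 1, x_{n+1} is any point of X with min_{x_i∈X_n} ‖x_{n+1} − x_i‖ ≥ α_n·CR(X_n). Then for all n ≥ 2: CR(X_n) ≤ (2/a)·CR*_n, SR(X_n) ≥ (a/2)·SR*_n, and MR(X_n) ≤ 2/a. -/

import Mathlib

open Metric Set MeasureTheory

/-- Distance from a point `x` to the nearest point of the design `D`. -/
noncomputable def minDist {E : Type*} [NormedAddCommGroup E] (D : Finset E) (x : E) : ℝ :=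
  sInf ((fun p => dist x p) '' (D : Set E))

/-- Fill distance (covering radius) of the design `D` for the set `A`:
`CR_A(D) = sup_{x ∈ A} min_{p ∈ D} ‖x - p‖`. -/
noncomputable def fillDist {E : Type*} [NormedAddCommGroup E] (A : Set E) (D : Finset E) : ℝ :=
  sSup ((fun x => minDist D x) '' A)

/-- Separation radius of the design `D`:
`SR(D) = (1/2) min_{p ≠ q ∈ D} ‖p - q‖`. -/
noncomputable def sepRad {E : Type*} [NormedAddCommGroup E] (D : Finset E) : ℝ :=
  (1 / 2) * sInf ((fun p : E × E => dist p.1 p.2) '' {p | p.1 ∈ D ∧ p.2 ∈ D ∧ p.1 ≠ p.2})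

/-- Mesh-ratio of the design `D` for the set `A`: `MR(D) = CR_A(D) / SR(D)`. -/
noncomputable def meshRatio {E : Type*} [NormedAddCommGroup E] (A : Set E) (D : Finset E) : ℝ :=
  fillDist A D / sepRad D

/-- The nested design consisting of the first `n` points of the sequence `x`. -/
noncomputable def design {E : Type*} (x : ℕ → E) (n : ℕ) : Finset E :=
  letI := Classical.decEq E
  (Finset.range n).image x


/-!
The greedy rule forces every new point to lie at distance at least `a·CR(X_k)` from the
previous ones, so `a·CR(X_{n-1}) ≤ 2·SR(X_n)`. On the other hand, for any two designs with
`#D < #T`, two points of `T` share a nearest point of `D` (pigeonhole), whence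
`SR(T) ≤ CR(D)`. Applying this to `(D, T) = (D', X_{n+1})` and to `(D, T) = (X_{n-1}, D')` for
an `n`-point design `D'`, and using that `CR(X_k)` decreases in `k`, gives the three bounds.
-/

theorem exists_ne_dist_le_of_card_lt {α : Type*} [PseudoMetricSpace α] {D T : Finset α}
    {r : ℝ} (hc : D.card < T.card) (hcover : ∀ y ∈ T, ∃ p ∈ D, dist y p ≤ r) :
    ∃ u ∈ T, ∃ v ∈ T, u ≠ v ∧ dist u v ≤ 2 * r := by
  obtain ⟨y, -⟩ := Finset.card_pos.mp (D.card.zero_le.trans_lt hc)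
  have : Nonempty α := ⟨y⟩
  choose! f hfD hf using hcover
  obtain ⟨u, hu, v, hv, huv, hfuv⟩ := Finset.exists_ne_map_eq_of_card_lt_of_maps_to hc hfD
  refine ⟨u, hu, v, hv, huv, ?_⟩
  calc dist u v ≤ dist u (f u) + dist v (f v) := by
        rw [hfuv]; exact dist_triangle_right u v (f v)
    _ ≤ 2 * r := by linarith [hf u hu, hf v hv]

section FillSeparation

variable {E : Type*} [NormedAddCommGroup E] {S : Set E} {D D' T : Finset E}

theorem minDist_le_dist {p : E} (hp : p ∈ D) (y : E) : minDist D y ≤ dist y p :=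
  csInf_le ⟨0, by rintro r ⟨q, -, rfl⟩; exact dist_nonneg⟩ ⟨p, hp, rfl⟩

theorem Finset.Nonempty.exists_minDist_eq (hD : D.Nonempty) (y : E) :
    ∃ p ∈ D, minDist D y = dist y p := by
  obtain ⟨p, hp, h⟩ :=
    ((Finset.coe_nonempty.mpr hD).image _).csInf_mem (D.finite_toSet.image (dist y))
  exact ⟨p, hp, h.symm⟩

theorem minDist_anti (hD : D.Nonempty) (h : D ⊆ D') (y : E) : minDist D' y ≤ minDist D y := by
  obtain ⟨p, hp, hEq⟩ := hD.exists_minDist_eq y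
  exact hEq ▸ minDist_le_dist (h hp) y

theorem fillDist_nonneg : 0 ≤ fillDist S D :=
  Real.sSup_nonneg <| by
    rintro r ⟨y, -, rfl⟩
    exact Real.sInf_nonneg (by rintro r ⟨p, -, rfl⟩; exact dist_nonneg)

theorem minDist_le_fillDist (hS : Bornology.IsBounded S) (hD : D.Nonempty) {y : E}
    (hy : y ∈ S) : minDist D y ≤ fillDist S D := by
  obtain ⟨p, hp⟩ := hD
  obtain ⟨R, hR⟩ := (isBounded_iff_subset_closedBall p).mp hS
  refine le_csSup ⟨R, ?_⟩ ⟨y, hy, rfl⟩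
  rintro r ⟨z, hz, rfl⟩
  exact (minDist_le_dist hp z).trans (mem_closedBall.mp (hR hz))

theorem exists_dist_le_fillDist (hS : Bornology.IsBounded S) (hD : D.Nonempty) {y : E}
    (hy : y ∈ S) : ∃ p ∈ D, dist y p ≤ fillDist S D := by
  obtain ⟨p, hp, hEq⟩ := hD.exists_minDist_eq y
  exact ⟨p, hp, hEq ▸ minDist_le_fillDist hS hD hy⟩

theorem fillDist_anti (hS : Bornology.IsBounded S) (hD : D.Nonempty) (h : D ⊆ D') :
    fillDist S D' ≤ fillDist S D :=
  Real.sSup_le (by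
    rintro r ⟨y, hy, rfl⟩
    exact (minDist_anti hD h y).trans (minDist_le_fillDist hS hD hy)) fillDist_nonneg

theorem sepRad_nonneg : 0 ≤ sepRad D :=
  mul_nonneg (by norm_num) <| Real.sInf_nonneg (by rintro r ⟨q, -, rfl⟩; exact dist_nonneg)

theorem two_mul_sepRad_le_dist {p q : E} (hp : p ∈ D) (hq : q ∈ D) (hpq : p ≠ q) :
    2 * sepRad D ≤ dist p q := by
  rw [sepRad, ← mul_assoc, mul_one_div_cancel two_ne_zero, one_mul]
  exact csInf_le ⟨0, by rintro r ⟨q, -, rfl⟩; exact dist_nonneg⟩ ⟨(p, q), ⟨hp, hq, hpq⟩, rfl⟩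

theorem le_two_mul_sepRad {c : ℝ} {p q : E} (hp : p ∈ D) (hq : q ∈ D) (hpq : p ≠ q)
    (h : ∀ u ∈ D, ∀ v ∈ D, u ≠ v → c ≤ dist u v) : c ≤ 2 * sepRad D := by
  rw [sepRad, ← mul_assoc, mul_one_div_cancel two_ne_zero, one_mul]
  exact le_csInf ⟨_, ⟨(p, q), ⟨hp, hq, hpq⟩, rfl⟩⟩
    (by rintro r ⟨⟨u, v⟩, ⟨hu, hv, huv⟩, rfl⟩; exact h u hu v hv huv)

theorem sepRad_le_fillDist_of_card_lt (hS : Bornology.IsBounded S) (hD : D.Nonempty)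
    (hTS : ↑T ⊆ S) (hc : D.card < T.card) : sepRad T ≤ fillDist S D := by
  obtain ⟨u, hu, v, hv, huv, hle⟩ := exists_ne_dist_le_of_card_lt hc
    fun y hy => exists_dist_le_fillDist hS hD (hTS hy)
  linarith [two_mul_sepRad_le_dist hu hv huv]

end FillSeparation

section Design

variable {E : Type*} {S : Set E} {x : ℕ → E} {k l : ℕ}

theorem mem_design {p : E} : p ∈ design x k ↔ ∃ i < k, x i = p := by
  simp [design]

theorem card_design (hinj : Function.Injective x) (k : ℕ) : (design x k).card = k := by
  classical
  rw [design, Finset.card_image_of_injective _ hinj, Finset.card_range]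

theorem design_mono (h : k ≤ l) : design x k ⊆ design x l := fun _ hp =>
  let ⟨i, hi, hxi⟩ := mem_design.1 hp
  mem_design.2 ⟨i, hi.trans_le h, hxi⟩

theorem design_nonempty (hk : 0 < k) : (design x k).Nonempty :=
  ⟨x 0, mem_design.2 ⟨0, hk, rfl⟩⟩

theorem coe_design_subset (hx : ∀ i, x i ∈ S) : ↑(design x k) ⊆ S := fun _ hp =>
  let ⟨i, _, hxi⟩ := mem_design.1 hp
  hxi ▸ hx i

end Design

section RelaxedGreedy

variable {E : Type*} [NormedAddCommGroup E] {S : Set E} {a : ℝ} {x : ℕ → E} {k : ℕ}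

theorem mul_fillDist_le_dist_of_greedy (hS : Bornology.IsBounded S) (ha : 0 ≤ a)
    (hgreedy : ∀ j, 1 ≤ j → a * fillDist S (design x j) ≤ minDist (design x j) (x j))
    {i j : ℕ} (hij : i < j) (hjk : j ≤ k) : a * fillDist S (design x k) ≤ dist (x i) (x j) :=
  calc a * fillDist S (design x k) ≤ a * fillDist S (design x j) :=
        mul_le_mul_of_nonneg_left
          (fillDist_anti hS (design_nonempty (i.zero_le.trans_lt hij)) (design_mono hjk)) ha
    _ ≤ minDist (design x j) (x j) := hgreedy j (by omega)
    _ ≤ dist (x j) (x i) := minDist_le_dist (mem_design.2 ⟨i, hij, rfl⟩) _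
    _ = dist (x i) (x j) := dist_comm _ _

theorem mul_fillDist_le_two_mul_sepRad_of_greedy (hS : Bornology.IsBounded S) (ha : 0 ≤ a)
    (hinj : Function.Injective x)
    (hgreedy : ∀ j, 1 ≤ j → a * fillDist S (design x j) ≤ minDist (design x j) (x j))
    (hk : 1 ≤ k) : a * fillDist S (design x k) ≤ 2 * sepRad (design x (k + 1)) := by
  refine le_two_mul_sepRad (mem_design.2 ⟨0, by omega, rfl⟩) (mem_design.2 ⟨1, by omega, rfl⟩)
    (hinj.ne zero_ne_one) fun u hu v hv huv => ?_
  obtain ⟨i, hi, rfl⟩ := mem_design.1 hu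
  obtain ⟨j, hj, rfl⟩ := mem_design.1 hv
  rcases lt_or_gt_of_ne (hinj.ne_iff.1 huv) with h | h
  · exact mul_fillDist_le_dist_of_greedy hS ha hgreedy h (by omega)
  · exact dist_comm (x j) (x i) ▸ mul_fillDist_le_dist_of_greedy hS ha hgreedy h (by omega)

end RelaxedGreedy

theorem statement10_general
    {E : Type*} [NormedAddCommGroup E]
    (S : Set E) (hS : IsCompact S)
    (a : ℝ) (ha : a ∈ Set.Ioc (0 : ℝ) 1) (α : ℕ → ℝ) (hα : ∀ k, α k ∈ Set.Icc a 1)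
    (x : ℕ → E) (hinj : Function.Injective x) (hx0 : x 0 ∈ S)
    (hrelax : ∀ k : ℕ, 1 ≤ k →
      x k ∈ S ∧ α k * fillDist S (design x k) ≤ minDist (design x k) (x k))
    (n : ℕ) (hn : 2 ≤ n) :
    (∀ D' : Finset E, ↑D' ⊆ S → D'.card = n →
        fillDist S (design x n) ≤ (2 / a) * fillDist S D') ∧
    (∀ D' : Finset E, ↑D' ⊆ S → D'.card = n →
        (a / 2) * sepRad D' ≤ sepRad (design x n)) ∧
    meshRatio S (design x n) ≤ 2 / a := by
  obtain ⟨ha0, -⟩ := ha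
  obtain ⟨m, rfl⟩ : ∃ m, n = m + 1 := ⟨n - 1, by omega⟩
  have hm : 1 ≤ m := by omega
  have hxS : ∀ k, x k ∈ S := fun k => k.casesOn hx0 fun k => (hrelax (k + 1) k.succ_pos).1
  have hsep : ∀ k, 1 ≤ k → a * fillDist S (design x k) ≤ 2 * sepRad (design x (k + 1)) :=
    fun k => mul_fillDist_le_two_mul_sepRad_of_greedy hS.isBounded ha0.le hinj fun j hj =>
      (mul_le_mul_of_nonneg_right (hα j).1 fillDist_nonneg).trans (hrelax j hj).2
  have hCR : a * fillDist S (design x (m + 1)) ≤ a * fillDist S (design x m) :=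
    mul_le_mul_of_nonneg_left
      (fillDist_anti hS.isBounded (design_nonempty hm) (design_mono m.le_succ)) ha0.le
  refine ⟨fun D' hD'S hD' => ?_, fun D' hD'S hD' => ?_, ?_⟩
  · have hSR : sepRad (design x (m + 2)) ≤ fillDist S D' :=
      sepRad_le_fillDist_of_card_lt hS.isBounded (Finset.card_pos.mp (by omega))
        (coe_design_subset hxS) (by rw [hD', card_design hinj]; omega)
    rw [div_mul_eq_mul_div, le_div_iff₀ ha0]
    linarith [hsep (m + 1) (by omega)]
  · have hSR : sepRad D' ≤ fillDist S (design x m) :=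
      sepRad_le_fillDist_of_card_lt hS.isBounded (design_nonempty hm) hD'S
        (by rw [hD', card_design hinj]; omega)
    linarith [hsep m hm, mul_le_mul_of_nonneg_left hSR ha0.le]
  · refine div_le_of_le_mul₀ sepRad_nonneg (by positivity) ?_
    rw [div_mul_eq_mul_div, le_div_iff₀ ha0]
    linarith [hsep m hm]

/-- Fix `a ∈ (0,1]` and `αₖ ∈ [a,1]`. If the nested designs `Xₙ` are
generated by the relaxed greedy-packing algorithm (the `(k+1)`-th point `x k` lies in `S` and
satisfies `min_{x_i ∈ X_k} ‖x_{k+1} − x_i‖ ≥ αₖ·CR(X_k)`), then for all `n ≥ 2`: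
`CR(Xₙ) ≤ (2/a)·CR*ₙ`, `SR(Xₙ) ≥ (a/2)·SR*ₙ` and `MR(Xₙ) ≤ 2/a` (the optimal values being
expressed by quantification over all `n`-point designs `D'` in `S`). -/
theorem statement10 {d : ℕ} (hd : 1 ≤ d)
    {E : Type*} [NormedAddCommGroup E] [NormedSpace ℝ E] [FiniteDimensional ℝ E]
    (hdim : Module.finrank ℝ E = d)
    (S : Set E) (hS : IsCompact S)
    (a : ℝ) (ha : a ∈ Set.Ioc (0 : ℝ) 1) (α : ℕ → ℝ) (hα : ∀ k, α k ∈ Set.Icc a 1)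
    (x : ℕ → E) (hinj : Function.Injective x) (hx0 : x 0 ∈ S)
    (hrelax : ∀ k : ℕ, 1 ≤ k →
      x k ∈ S ∧ α k * fillDist S (design x k) ≤ minDist (design x k) (x k))
    (n : ℕ) (hn : 2 ≤ n) :
    (∀ D' : Finset E, ↑D' ⊆ S → D'.card = n →
        fillDist S (design x n) ≤ (2 / a) * fillDist S D') ∧
    (∀ D' : Finset E, ↑D' ⊆ S → D'.card = n →
        (a / 2) * sepRad D' ≤ sepRad (design x n)) ∧
    meshRatio S (design x n) ≤ 2 / a :=
  statement10_general S hS a ha α hα x hinj hx0 hrelax n hn
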